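/- Let A ∈ ℂ^{n×n}, B ∈ ℂ^{n×m}, C ∈ ℂ^{p×n}, and let q = s + p. Let V ∈ ℂ^{n×q} satisfy VᴴV = I_q, let K, H ∈ ℂ^{q×s} satisfy AᴴVK = VH, and let C̃ ∈ ℂ^{q×p} satisfy Cᴴ = VC̃. Let L ∈ ℂ^{q×s} be such that LᴴK is invertible, set π := K(LᴴK)⁻¹Lᴴ, π̃ := I − π. Let Y ∈ ℂ^{s×s} be Hermitian, X := V K Y Kᴴ Vᴴ, S := Kᴴ Vᴴ B Bᴴ V K, and suppose π (H Y Kᴴ + K Y Hᴴ + C̃C̃ᴴ − K Y S Y Kᴴ) πᴴ = 0. Let U, W ∈ ℂ^{q×p} have full column rank with LᴴU = 0 and KᴴW = 0, and set Υ := K Y Hᴴ + (I − (1/2)π̃) C̃C̃ᴴ and T := Υ W (UᴴW)⁻¹ ∈ ℂ^{q×p}. Let Q ∈ ℂ^{q×2p} with QᴴQ = I_{2p} and R ∈ ℂ^{2p×2p} be such that the block matrix [U T] (horizontal concatenation) equals QR. Then ‖R(X)‖_F = ‖R J Rᴴ‖_F, where J ∈ ℂ^{2p×2p} is the block matrix with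 zero p×p diagonal blocks and identity p×p off-diagonal blocks, J = fromBlocks 0 I_p I_p 0. -/

import Mathlib

/-!
Since `Aᴴ V K = V H` and `Cᴴ = V C̃`, the residual of `X = V K Y Kᴴ Vᴴ` is `V M Vᴴ` for a
`q × q` matrix `M`, so `‖R(X)‖_F = ‖M‖_F`. With `π̃ K = 0`, the projected equation `π M πᴴ = 0`
gives the splitting `M = Υ π̃ᴴ + π̃ Υᴴ`. As `LᴴK` is invertible while `LᴴU = 0`, the `q` columns
of `K` and `U` are independent, hence span `ℂ^q`; this pins down `π̃ᴴ = W (UᴴW)⁻¹ Uᴴ`, whence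
`M = T Uᴴ + U Tᴴ = [U T] J [U T]ᴴ = Q (R J Rᴴ) Qᴴ`, and `Q` has orthonormal columns.
-/

open Matrix

noncomputable def riccatiResidual {n m p : ℕ} (A : Matrix (Fin n) (Fin n) ℂ)
    (B : Matrix (Fin n) (Fin m) ℂ) (C : Matrix (Fin p) (Fin n) ℂ)
    (X : Matrix (Fin n) (Fin n) ℂ) : Matrix (Fin n) (Fin n) ℂ :=
  Aᴴ * X + X * A + Cᴴ * C - X * B * Bᴴ * X

noncomputable def frobNorm {a b : Type*} [Fintype a] [Fintype b]
    (M : Matrix a b ℂ) : ℝ :=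
  Real.sqrt (∑ i, ∑ j, ‖M i j‖ ^ 2)

section Frobenius

variable {ι κ : Type*} [Fintype ι] [Fintype κ]

lemma frobNorm_eq_sqrt_re_trace (M : Matrix ι κ ℂ) : frobNorm M = √(Mᴴ * M).trace.re := by
  rw [frobNorm, Finset.sum_comm, trace, Complex.re_sum]
  congr 1
  refine Finset.sum_congr rfl fun j _ => ?_
  rw [diag_apply, mul_apply, Complex.re_sum]
  refine Finset.sum_congr rfl fun i _ => ?_
  rw [conjTranspose_apply, Complex.sq_norm, Complex.normSq_apply, Complex.mul_re]
  simp

lemma frobNorm_mul_mul_conjTranspose [DecidableEq κ] {V : Matrix ι κ ℂ} (hV : Vᴴ * V = 1)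
    (N : Matrix κ κ ℂ) : frobNorm (V * N * Vᴴ) = frobNorm N := by
  have h : (V * N * Vᴴ)ᴴ * (V * N * Vᴴ) = V * (Nᴴ * N) * Vᴴ := by
    simp only [conjTranspose_mul, conjTranspose_conjTranspose, Matrix.mul_assoc]
    rw [← Matrix.mul_assoc Vᴴ V, hV, Matrix.one_mul]
  rw [frobNorm_eq_sqrt_re_trace, frobNorm_eq_sqrt_re_trace, h, trace_mul_cycle, hV,
    Matrix.one_mul]

end Frobenius

section Compressed

variable {ι κ ρ : Type*} [Fintype κ] [Fintype ρ]

def compressedResidual (K H : Matrix ι κ ℂ) (Ct : Matrix ι ρ ℂ) (Y S : Matrix κ κ ℂ) :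
    Matrix ι ι ℂ :=
  H * Y * Kᴴ + K * Y * Hᴴ + Ct * Ctᴴ - K * Y * S * Y * Kᴴ

lemma riccatiResidual_eq_compressedResidual [Fintype ι] {n m p : ℕ}
    {A : Matrix (Fin n) (Fin n) ℂ} (B : Matrix (Fin n) (Fin m) ℂ) {C : Matrix (Fin p) (Fin n) ℂ}
    {V : Matrix (Fin n) ι ℂ} {K H : Matrix ι κ ℂ} (hKH : Aᴴ * V * K = V * H)
    {Ct : Matrix ι (Fin p) ℂ} (hCt : Cᴴ = V * Ct) (Y : Matrix κ κ ℂ) :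
    riccatiResidual A B C (V * K * Y * Kᴴ * Vᴴ) =
      V * compressedResidual K H Ct Y (Kᴴ * Vᴴ * B * Bᴴ * V * K) * Vᴴ := by
  have hAV : ∀ Z : Matrix κ (Fin n) ℂ, Aᴴ * (V * (K * Z)) = V * (H * Z) := fun Z => by
    rw [← Matrix.mul_assoc, ← Matrix.mul_assoc, hKH, Matrix.mul_assoc]
  have hVA : Kᴴ * (Vᴴ * A) = Hᴴ * Vᴴ := by
    simpa only [conjTranspose_mul, conjTranspose_conjTranspose, Matrix.mul_assoc]
      using congrArg conjTranspose hKH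
  have hC : C = Ctᴴ * Vᴴ := by
    simpa only [conjTranspose_mul, conjTranspose_conjTranspose] using congrArg conjTranspose hCt
  rw [riccatiResidual, compressedResidual, hC, conjTranspose_mul]
  simp only [Matrix.mul_add, Matrix.add_mul, Matrix.mul_sub, Matrix.sub_mul, Matrix.mul_assoc,
    conjTranspose_conjTranspose, hAV, hVA]

lemma eq_mul_star_add_of_mul_mul_star_eq_zero {R : Type*} [Ring R] [StarRing R] {π M : R}
    (h : π * M * star π = 0) : M = M * star (1 - π) + (1 - π) * M * star π :=
  calc M = π * M * star π + (M * star (1 - π) + (1 - π) * M * star π) := by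
        rw [star_sub, star_one]; noncomm_ring
    _ = M * star (1 - π) + (1 - π) * M * star π := by rw [h, zero_add]

lemma compressedResidual_eq_of_proj [Fintype ι] [DecidableEq ι] {K H : Matrix ι κ ℂ}
    {Ct : Matrix ι ρ ℂ} {Y S : Matrix κ κ ℂ} {π : Matrix ι ι ℂ} (hπK : π * K = K) (hY : Yᴴ = Y)
    (h : π * compressedResidual K H Ct Y S * πᴴ = 0) :
    compressedResidual K H Ct Y S =
      (K * Y * Hᴴ + (1 - (1/2 : ℂ) • (1 - π)) * (Ct * Ctᴴ)) * (1 - π)ᴴ +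
        (1 - π) * (K * Y * Hᴴ + (1 - (1/2 : ℂ) • (1 - π)) * (Ct * Ctᴴ))ᴴ := by
  have hπK' : ∀ Z : Matrix κ ι ℂ, π * (K * Z) = K * Z := fun Z => by
    rw [← Matrix.mul_assoc, hπK]
  have hKπ : Kᴴ * πᴴ = Kᴴ := by
    simpa only [conjTranspose_mul] using congrArg conjTranspose hπK
  have hsplit := eq_mul_star_add_of_mul_mul_star_eq_zero h
  simp only [star_eq_conjTranspose] at hsplit
  rw [hsplit, compressedResidual]
  simp only [conjTranspose_add, conjTranspose_sub, conjTranspose_smul, conjTranspose_mul,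
    conjTranspose_conjTranspose, conjTranspose_one, hY, Matrix.mul_add, Matrix.add_mul,
    Matrix.mul_sub, Matrix.sub_mul, Matrix.mul_one, Matrix.one_mul, Matrix.smul_mul,
    Matrix.mul_smul, Matrix.mul_assoc, hπK', hKπ, star_div₀, star_one, star_ofNat]
  module

end Compressed

section Oblique

variable {𝕜 ι κ ρ : Type*} [Field 𝕜] [StarRing 𝕜] [Fintype ι]

lemma isUnit_fromCols_submatrix [Fintype κ] [Fintype ρ] [DecidableEq ι] [DecidableEq κ]
    (e : κ ⊕ ρ ≃ ι) {K L : Matrix ι κ 𝕜} {U : Matrix ι ρ 𝕜}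
    (hLK : IsUnit (Lᴴ * K)) (hLU : Lᴴ * U = 0) (hU : ∀ x, U *ᵥ x = 0 → x = 0) :
    IsUnit ((fromCols K U).submatrix id e.symm) := by
  rw [← mulVec_injective_iff_isUnit, ← coe_mulVecLin, injective_iff_map_eq_zero]
  intro x hx
  set a := x ∘ e ∘ Sum.inl
  set b := x ∘ e ∘ Sum.inr
  have hab : K *ᵥ a + U *ᵥ b = 0 := by
    simpa [submatrix_mulVec_equiv, Function.comp_assoc] using hx
  have hLKa : (Lᴴ * K) *ᵥ a = (Lᴴ * K) *ᵥ 0 := by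
    calc (Lᴴ * K) *ᵥ a = Lᴴ *ᵥ (K *ᵥ a + U *ᵥ b) := by
          rw [mulVec_add, mulVec_mulVec, mulVec_mulVec, hLU, zero_mulVec, add_zero]
      _ = (Lᴴ * K) *ᵥ 0 := by rw [hab, mulVec_zero, mulVec_zero]
  have ha : a = 0 := mulVec_injective_iff_isUnit.2 hLK hLKa
  have hb : b = 0 := hU b (by simpa [ha] using hab)
  funext i
  obtain ⟨j | j, rfl⟩ := e.surjective i
  · exact congrFun ha j
  · exact congrFun hb j

lemma eq_zero_of_conjTranspose_mulVec_eq_zero [DecidableEq ι] (e : κ ⊕ ρ ≃ ι)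
    {K : Matrix ι κ 𝕜} {U : Matrix ι ρ 𝕜} (hG : IsUnit ((fromCols K U).submatrix id e.symm))
    {v : ι → 𝕜} (hK : Kᴴ *ᵥ v = 0) (hU : Uᴴ *ᵥ v = 0) : v = 0 := by
  have hGv : ((fromCols K U).submatrix id e.symm)ᴴ *ᵥ v = 0 := by
    rw [conjTranspose_submatrix, conjTranspose_fromCols_eq_fromRows_conjTranspose]
    funext i
    change (fromRows Kᴴ Uᴴ *ᵥ v) (e.symm i) = 0
    rw [fromRows_mulVec, hK, hU]
    rcases e.symm i with j | j <;> rfl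
  exact mulVec_injective_iff_isUnit.2 ((isUnit_conjTranspose _).2 hG)
    (hGv.trans (mulVec_zero _).symm)

variable {K : Matrix ι κ 𝕜} {U W : Matrix ι ρ 𝕜}

lemma isUnit_conjTranspose_mul [Fintype ρ] [DecidableEq ρ]
    (hspan : ∀ v, Kᴴ *ᵥ v = 0 → Uᴴ *ᵥ v = 0 → v = 0) (hKW : Kᴴ * W = 0)
    (hW : ∀ x, W *ᵥ x = 0 → x = 0) : IsUnit (Uᴴ * W) := by
  rw [← mulVec_injective_iff_isUnit, ← coe_mulVecLin, injective_iff_map_eq_zero]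
  intro x hx
  refine hW x (hspan _ ?_ ?_)
  · rw [mulVec_mulVec, hKW, zero_mulVec]
  · rwa [mulVec_mulVec]

lemma eq_mul_inv_mul_conjTranspose [Fintype ρ] [DecidableEq ρ]
    (hspan : ∀ v, Kᴴ *ᵥ v = 0 → Uᴴ *ᵥ v = 0 → v = 0) (hKW : Kᴴ * W = 0)
    (hUW : IsUnit (Uᴴ * W)) {P : Matrix ι ι 𝕜} (hKP : Kᴴ * P = 0) (hUP : Uᴴ * P = Uᴴ) :
    P = W * (Uᴴ * W)⁻¹ * Uᴴ := by
  rw [← sub_eq_zero, ext_iff_mulVec]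
  intro x
  rw [zero_mulVec]
  refine hspan _ ?_ ?_
  · rw [mulVec_mulVec, Matrix.mul_sub, hKP, ← Matrix.mul_assoc, ← Matrix.mul_assoc, hKW,
      Matrix.zero_mul, Matrix.zero_mul, sub_zero, zero_mulVec]
  · rw [mulVec_mulVec, Matrix.mul_sub, hUP, ← Matrix.mul_assoc, ← Matrix.mul_assoc,
      mul_nonsing_inv _ ((isUnit_iff_isUnit_det _).1 hUW), Matrix.one_mul, sub_self, zero_mulVec]

end Oblique

lemma fromCols_mul_fromBlocks_swap_mul_conjTranspose {ι ρ R : Type*} [Fintype ρ] [DecidableEq ρ]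
    [Semiring R] [StarRing R] (U T : Matrix ι ρ R) :
    fromCols U T * (fromBlocks 0 1 1 0 : Matrix (ρ ⊕ ρ) (ρ ⊕ ρ) R) * (fromCols U T)ᴴ =
      T * Uᴴ + U * Tᴴ := by
  rw [fromCols_mul_fromBlocks, conjTranspose_fromCols_eq_fromRows_conjTranspose,
    fromCols_mul_fromRows]
  simp

/-- `‖R(X)‖_F = ‖R J Rᴴ‖_F` with the economy-size QR
decomposition `[U T] = QR` and `J = fromBlocks 0 I I 0`. -/
theorem stmt_7 {n m p s : ℕ}
    (A : Matrix (Fin n) (Fin n) ℂ) (B : Matrix (Fin n) (Fin m) ℂ)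
    (C : Matrix (Fin p) (Fin n) ℂ)
    (V : Matrix (Fin n) (Fin (s + p)) ℂ) (hV : Vᴴ * V = 1)
    (K H : Matrix (Fin (s + p)) (Fin s) ℂ) (hKH : Aᴴ * V * K = V * H)
    (Ct : Matrix (Fin (s + p)) (Fin p) ℂ) (hCt : Cᴴ = V * Ct)
    (L : Matrix (Fin (s + p)) (Fin s) ℂ) (hLK : IsUnit (Lᴴ * K))
    (pr : Matrix (Fin (s + p)) (Fin (s + p)) ℂ)
    (hpr : pr = K * (Lᴴ * K)⁻¹ * Lᴴ)
    (pt : Matrix (Fin (s + p)) (Fin (s + p)) ℂ) (hpt : pt = 1 - pr)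
    (Y : Matrix (Fin s) (Fin s) ℂ) (hY : Yᴴ = Y)
    (X : Matrix (Fin n) (Fin n) ℂ) (hX : X = V * K * Y * Kᴴ * Vᴴ)
    (S : Matrix (Fin s) (Fin s) ℂ) (hS : S = Kᴴ * Vᴴ * B * Bᴴ * V * K)
    (hproj : pr * (H * Y * Kᴴ + K * Y * Hᴴ + Ct * Ctᴴ - K * Y * S * Y * Kᴴ)
        * prᴴ = 0)
    (U W : Matrix (Fin (s + p)) (Fin p) ℂ)
    (hU : ∀ x : Fin p → ℂ, U.mulVec x = 0 → x = 0)
    (hW : ∀ x : Fin p → ℂ, W.mulVec x = 0 → x = 0)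
    (hLU : Lᴴ * U = 0) (hKW : Kᴴ * W = 0)
    (Ups : Matrix (Fin (s + p)) (Fin (s + p)) ℂ)
    (hUps : Ups = K * Y * Hᴴ + (1 - (1/2 : ℂ) • pt) * (Ct * Ctᴴ))
    (T : Matrix (Fin (s + p)) (Fin p) ℂ) (hT : T = Ups * W * (Uᴴ * W)⁻¹)
    (Q : Matrix (Fin (s + p)) (Fin p ⊕ Fin p) ℂ) (hQ : Qᴴ * Q = 1)
    (R : Matrix (Fin p ⊕ Fin p) (Fin p ⊕ Fin p) ℂ)
    (hQR : Matrix.fromCols U T = Q * R) :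
    frobNorm (riccatiResidual A B C X) =
      frobNorm (R * Matrix.fromBlocks 0 1 1 0 * Rᴴ) := by
  subst hX hS
  have hprK : pr * K = K := by
    rw [hpr, Matrix.mul_assoc _ Lᴴ, Matrix.mul_assoc,
      nonsing_inv_mul _ ((isUnit_iff_isUnit_det _).1 hLK), Matrix.mul_one]
  have hprU : pr * U = 0 := by
    rw [hpr, Matrix.mul_assoc, hLU, Matrix.mul_zero]
  have hspan : ∀ v, Kᴴ *ᵥ v = 0 → Uᴴ *ᵥ v = 0 → v = 0 := fun _ =>
    eq_zero_of_conjTranspose_mulVec_eq_zero _ (isUnit_fromCols_submatrix finSumFinEquiv hLK hLU hU)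
  have hUW := isUnit_conjTranspose_mul hspan hKW hW
  have hpt' : pt = (W * (Uᴴ * W)⁻¹ * Uᴴ)ᴴ := by
    rw [← eq_mul_inv_mul_conjTranspose hspan hKW hUW (P := ptᴴ), conjTranspose_conjTranspose]
    · rw [← conjTranspose_mul, hpt, Matrix.sub_mul, hprK, Matrix.one_mul, sub_self,
        conjTranspose_zero]
    · rw [← conjTranspose_mul, hpt, Matrix.sub_mul, hprU, Matrix.one_mul, sub_zero]
  have hM : compressedResidual K H Ct Y (Kᴴ * Vᴴ * B * Bᴴ * V * K) = T * Uᴴ + U * Tᴴ := by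
    rw [compressedResidual_eq_of_proj hprK hY hproj, ← hpt, ← hUps, hpt', hT]
    simp only [conjTranspose_mul, conjTranspose_conjTranspose, Matrix.mul_assoc]
  rw [riccatiResidual_eq_compressedResidual B hKH hCt, frobNorm_mul_mul_conjTranspose hV, hM,
    ← fromCols_mul_fromBlocks_swap_mul_conjTranspose, hQR, ← frobNorm_mul_mul_conjTranspose hQ]
  simp only [conjTranspose_mul, Matrix.mul_assoc]
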